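/- arXiv:math/0501314 — 3 statements merged into one kernel-verified Lean document; each statement's English description precedes it below -/
import Mathlib

section
/- Let V₁, V₂ be finite nonempty sets, f : V₁ × V₂ → ℝ, and let A ⊆ V₁, B ⊆ V₂ be arbitrary subsets. Then |𝔼_{x₁ ∈ V₁, x₂ ∈ V₂} f(x₁,x₂) 1_A(x₁) 1_B(x₂)| ≤ ‖f‖_{□}, where ‖f‖_{□}⁴ := 𝔼_{x₁,x₁',x₂,x₂'} f(x₁,x₂)f(x₁,x₂')f(x₁',x₂)f(x₁',x₂'). -/
/-- Gowers uniform functions are orthogonal to lower order sets (two-variable case):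
the average of `f · 1_A ⊗ 1_B` is bounded by the Gowers box norm of `f`. -/
theorem gowers_orthogonal_lower_order {V₁ V₂ : Type*} [Fintype V₁] [Fintype V₂]
    [Nonempty V₁] [Nonempty V₂] (f : V₁ × V₂ → ℝ) (A : Set V₁) (B : Set V₂) :
    |(∑ x₁ : V₁, ∑ x₂ : V₂,
        f (x₁, x₂) * A.indicator (fun _ => (1 : ℝ)) x₁ * B.indicator (fun _ => (1 : ℝ)) x₂) /
      ((Fintype.card V₁ : ℝ) * (Fintype.card V₂))|
    ≤ ((∑ x₁ : V₁, ∑ x₁' : V₁, ∑ x₂ : V₂, ∑ x₂' : V₂,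
        f (x₁, x₂) * f (x₁, x₂') * f (x₁', x₂) * f (x₁', x₂')) /
      ((Fintype.card V₁ : ℝ) * (Fintype.card V₁) * (Fintype.card V₂) * (Fintype.card V₂)))
        ^ ((1 : ℝ) / 4) := by
  classical
  set n : ℝ := (Fintype.card V₁ : ℝ) with hn_def
  set m : ℝ := (Fintype.card V₂ : ℝ) with hm_def
  have hn : 0 < n := by
    simp only [hn_def]; exact_mod_cast Fintype.card_pos
  have hm : 0 < m := by
    simp only [hm_def]; exact_mod_cast Fintype.card_pos
  set a : V₁ → ℝ := A.indicator (fun _ => (1 : ℝ)) with ha_def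
  set b : V₂ → ℝ := B.indicator (fun _ => (1 : ℝ)) with hb_def
  have ha01 : ∀ x, a x = 0 ∨ a x = 1 := by
    intro x; by_cases hx : x ∈ A <;> simp [ha_def, Set.indicator_apply, hx]
  have hb01 : ∀ x, b x = 0 ∨ b x = 1 := by
    intro x; by_cases hx : x ∈ B <;> simp [hb_def, Set.indicator_apply, hx]
  set S : ℝ := ∑ x₁ : V₁, ∑ x₂ : V₂, f (x₁, x₂) * a x₁ * b x₂ with hS_def
  set T : ℝ := ∑ x₁ : V₁, ∑ x₁' : V₁, ∑ x₂ : V₂, ∑ x₂' : V₂,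
      f (x₁, x₂) * f (x₁, x₂') * f (x₁', x₂) * f (x₁', x₂') with hT_def
  set h : V₁ → ℝ := fun x₁ => ∑ x₂ : V₂, f (x₁, x₂) * b x₂ with hh_def
  set k : V₂ → V₂ → ℝ := fun x₂ x₂' => ∑ x₁ : V₁, f (x₁, x₂) * f (x₁, x₂') with hk_def
  -- Step 1: Cauchy–Schwarz in x₁
  have step1 : S ^ 2 ≤ n * ∑ x₁ : V₁, h x₁ ^ 2 := by
    have hS : S = ∑ x₁ : V₁, a x₁ * h x₁ := by
      simp only [hS_def, hh_def, Finset.mul_sum]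
      refine Finset.sum_congr rfl fun x₁ _ => Finset.sum_congr rfl fun x₂ _ => by ring
    have cs := Finset.sum_mul_sq_le_sq_mul_sq Finset.univ a h
    have ha2 : (∑ x₁ : V₁, a x₁ ^ 2) ≤ n := by
      have : ∀ x₁ : V₁, a x₁ ^ 2 ≤ 1 := by
        intro x; rcases ha01 x with hx | hx <;> simp [hx]
      calc (∑ x₁ : V₁, a x₁ ^ 2) ≤ ∑ _x₁ : V₁, (1 : ℝ) :=
            Finset.sum_le_sum fun i _ => this i
        _ = n := by simp [hn_def]
    calc S ^ 2 ≤ (∑ x₁ : V₁, a x₁ ^ 2) * ∑ x₁ : V₁, h x₁ ^ 2 := hS ▸ cs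
      _ ≤ n * ∑ x₁ : V₁, h x₁ ^ 2 := by
          apply mul_le_mul_of_nonneg_right ha2 (by positivity)
  -- Step 2: expand the square of h
  have step2 : (∑ x₁ : V₁, h x₁ ^ 2)
      = ∑ p : V₂ × V₂, (b p.1 * b p.2) * k p.1 p.2 := by
    have expand : ∀ x₁ : V₁, h x₁ ^ 2
        = ∑ p : V₂ × V₂, (f (x₁, p.1) * b p.1) * (f (x₁, p.2) * b p.2) := by
      intro x₁
      rw [sq, hh_def]
      rw [Finset.sum_mul_sum]
      rw [← Finset.sum_product']
      rfl
    simp only [expand]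
    rw [Finset.sum_comm]
    refine Finset.sum_congr rfl fun p _ => ?_
    simp only [hk_def, Finset.mul_sum]
    refine Finset.sum_congr rfl fun x₁ _ => by ring
  -- Step 3: Cauchy–Schwarz in (x₂, x₂')
  have step3 : (∑ p : V₂ × V₂, (b p.1 * b p.2) * k p.1 p.2) ^ 2
      ≤ (m * m) * ∑ p : V₂ × V₂, k p.1 p.2 ^ 2 := by
    have cs := Finset.sum_mul_sq_le_sq_mul_sq Finset.univ
      (fun p : V₂ × V₂ => b p.1 * b p.2) (fun p : V₂ × V₂ => k p.1 p.2)
    have hb2 : (∑ p : V₂ × V₂, (b p.1 * b p.2) ^ 2) ≤ m * m := by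
      have hle : ∀ p : V₂ × V₂, (b p.1 * b p.2) ^ 2 ≤ 1 := by
        intro p
        rcases hb01 p.1 with h1 | h1 <;> rcases hb01 p.2 with h2 | h2 <;> simp [h1, h2]
      calc (∑ p : V₂ × V₂, (b p.1 * b p.2) ^ 2) ≤ ∑ _p : V₂ × V₂, (1 : ℝ) :=
            Finset.sum_le_sum fun i _ => hle i
        _ = m * m := by simp [hm_def, Fintype.card_prod]
    refine cs.trans ?_
    apply mul_le_mul_of_nonneg_right hb2 (by positivity)
  -- Step 4: the sum of k² equals T
  have step4 : (∑ p : V₂ × V₂, k p.1 p.2 ^ 2) = T := by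
    have expand : ∀ p : V₂ × V₂, k p.1 p.2 ^ 2
        = ∑ q : V₁ × V₁,
            f (q.1, p.1) * f (q.1, p.2) * f (q.2, p.1) * f (q.2, p.2) := by
      intro p
      rw [sq, hk_def]
      rw [Finset.sum_mul_sum]
      rw [← Finset.sum_product']
      refine Finset.sum_congr rfl fun q _ => by ring
    simp only [expand]
    rw [Finset.sum_comm, hT_def]
    simp only [Fintype.sum_prod_type]
  -- Combine: S ^ 4 ≤ n^2 * m^2 * T
  have hH_nonneg : (0 : ℝ) ≤ ∑ x₁ : V₁, h x₁ ^ 2 := by positivity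
  have key : S ^ 4 ≤ n ^ 2 * m ^ 2 * T := by
    have h1 : S ^ 4 ≤ n ^ 2 * (∑ x₁ : V₁, h x₁ ^ 2) ^ 2 := by
      have := mul_self_le_mul_self (sq_nonneg S) step1
      calc S ^ 4 = S ^ 2 * S ^ 2 := by ring
        _ ≤ (n * ∑ x₁ : V₁, h x₁ ^ 2) * (n * ∑ x₁ : V₁, h x₁ ^ 2) := this
        _ = n ^ 2 * (∑ x₁ : V₁, h x₁ ^ 2) ^ 2 := by ring
    have h2 : (∑ x₁ : V₁, h x₁ ^ 2) ^ 2 ≤ m ^ 2 * T := by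
      rw [step2]
      calc (∑ p : V₂ × V₂, (b p.1 * b p.2) * k p.1 p.2) ^ 2
          ≤ (m * m) * ∑ p : V₂ × V₂, k p.1 p.2 ^ 2 := step3
        _ = m ^ 2 * T := by rw [step4]; ring
    calc S ^ 4 ≤ n ^ 2 * (∑ x₁ : V₁, h x₁ ^ 2) ^ 2 := h1
      _ ≤ n ^ 2 * (m ^ 2 * T) := by
          apply mul_le_mul_of_nonneg_left h2 (by positivity)
      _ = n ^ 2 * m ^ 2 * T := by ring
  -- T is nonnegative
  have hT_nonneg : (0 : ℝ) ≤ T := by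
    rw [← step4]
    positivity
  -- Final: translate to the averaged form with the fourth root
  set u : ℝ := |S / (n * m)| with hu_def
  set v : ℝ := T / (n * n * m * m) with hv_def
  have hu_nonneg : (0 : ℝ) ≤ u := abs_nonneg _
  have hv_nonneg : (0 : ℝ) ≤ v := by
    apply div_nonneg hT_nonneg; positivity
  have hu4 : u ^ (4 : ℕ) ≤ v := by
    have : u ^ (4 : ℕ) = S ^ 4 / (n ^ 4 * m ^ 4) := by
      rw [hu_def, ← abs_pow]
      rw [div_pow, abs_of_nonneg]
      · ring_nf
      · have h4 : (0:ℝ) < (n*m)^4 := by positivity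
        have : (0:ℝ) ≤ S ^ 4 := by
          have : S ^ 4 = (S^2)^2 := by ring
          rw [this]; positivity
        positivity
    rw [this, hv_def]
    rw [div_le_div_iff₀ (by positivity) (by positivity)]
    calc S ^ 4 * (n * n * m * m) ≤ (n ^ 2 * m ^ 2 * T) * (n * n * m * m) := by
          apply mul_le_mul_of_nonneg_right key (by positivity)
      _ = T * (n ^ 4 * m ^ 4) := by ring
  have hfinal : u ≤ v ^ ((1 : ℝ) / 4) := by
    have h1 : u = (u ^ (4 : ℕ)) ^ ((1 : ℝ) / 4) := by
      rw [← Real.rpow_natCast u 4, ← Real.rpow_mul hu_nonneg]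
      norm_num
    rw [h1]
    exact Real.rpow_le_rpow (by positivity) hu4 (by norm_num)
  exact hfinal
end

section
/- The Gaussian zeta function ζ_{ℤ[i]}(s) := ∑_{n ∈ ℤ[i], n ≠ 0} N(n)^{-s} satisfies, for real s > 1 with s sufficiently close to 1: ζ_{ℤ[i]}(s) = π/(s-1) + O(1). In particular ζ_{ℤ[i]}(s) (s-1) → π as s → 1⁺. -/
open scoped Topology

/-- The Gaussian zeta function `ζ_{ℤ[i]}(s) = ∑_{n ≠ 0} N(n)^{-s}`. -/
noncomputable def gaussianZeta (s : ℝ) : ℝ :=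
  ∑' n : {n : GaussianInt // n ≠ 0}, ((n.1.norm.natAbs : ℝ)) ^ (-s)

/-!
The unit squares `[a, a + 1) × [b, b + 1)` attached to the Gaussian integers `a + b i` with
`|a + b i| < r` are disjoint, have area `1`, and cover the disc of radius `r - 2` while lying in
the disc of radius `r + 2`. Hence the number `N(r)` of nonzero Gaussian integers with `|z| < r` is
`π r² + O(r)`. Writing `|z|^(-2s) = 2s ∫_{|z|}^∞ r^(-2s-1) dr` and exchanging sum and integral gives
`ζ_{ℤ[i]}(s) = 2s ∫_1^∞ N(r) r^(-2s-1) dr`; the main term `π r²` contributes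
`2s π / (2s - 2) = π + π / (s - 1)`, and the error `O(r)` contributes `O(2s / (2s - 1)) = O(1)`.
-/

open MeasureTheory Set Filter Metric Function
open scoped ENNReal Real

local notation "ℤ[i]" => GaussianInt

lemma lintegral_Ioi_rpow_neg_sub_one {σ a : ℝ} (hσ : 0 < σ) (ha : 0 < a) :
    ∫⁻ r in Ioi a, ENNReal.ofReal (r ^ (-σ - 1)) = ENNReal.ofReal (a ^ (-σ) / σ) := by
  have hnonneg : 0 ≤ᵐ[volume.restrict (Ioi a)] fun r : ℝ ↦ r ^ (-σ - 1) :=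
    (ae_restrict_iff' measurableSet_Ioi).2 <| .of_forall fun r hr ↦
      Real.rpow_nonneg (ha.trans hr).le _
  rw [← ofReal_integral_eq_lintegral_ofReal
    (integrableOn_Ioi_rpow_of_lt (by linarith) ha) hnonneg,
    integral_Ioi_rpow_of_lt (by linarith) ha, sub_add_cancel, neg_div_neg_eq]

theorem tsum_ofReal_rpow_neg_eq_lintegral {ι : Type*} [Countable ι] (a : ι → ℝ)
    (ha : ∀ i, 1 ≤ a i) {σ : ℝ} (hσ : 0 < σ) :
    ∑' i, ENNReal.ofReal (a i ^ (-σ)) =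
      ENNReal.ofReal σ * ∫⁻ r in Ioi 1, {i | a i < r}.encard * ENNReal.ofReal (r ^ (-σ - 1)) := by
  set g : ℝ → ℝ≥0∞ := fun r ↦ ENNReal.ofReal (r ^ (-σ - 1))
  have hterm (i : ι) : ENNReal.ofReal (a i ^ (-σ)) =
      ENNReal.ofReal σ * ∫⁻ r in Ioi 1, (Ioi (a i)).indicator g r := by
    rw [lintegral_indicator measurableSet_Ioi, Measure.restrict_restrict measurableSet_Ioi,
      Ioi_inter_Ioi, max_eq_left (ha i), lintegral_Ioi_rpow_neg_sub_one hσ (by linarith [ha i]),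
      ← ENNReal.ofReal_mul hσ.le, mul_div_cancel₀ _ hσ.ne']
  have hcount (r : ℝ) : ∑' i, (Ioi (a i)).indicator g r = {i | a i < r}.encard * g r := by
    rw [← ENNReal.tsum_set_const, tsum_subtype _ fun _ ↦ g r]
    rfl
  simp_rw [hterm, ENNReal.tsum_mul_left]
  rw [← lintegral_tsum (f := fun i r ↦ (Ioi (a i)).indicator g r)
    fun i ↦ ((by fun_prop : Measurable g).indicator measurableSet_Ioi).aemeasurable]
  simp_rw [hcount]
  rfl

theorem abs_setIntegral_Ioi_one_mul_rpow_sub_le {c : ℝ → ℝ} (hc : Measurable c)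
    {A K α β σ : ℝ} (hα : α < σ) (hβ : β < σ)
    (hc_bound : ∀ r, 1 < r → |c r - A * r ^ α| ≤ K * r ^ β) :
    |(∫ r in Ioi 1, c r * r ^ (-σ - 1)) - A / (σ - α)| ≤ K / (σ - β) := by
  have hint {γ : ℝ} (hγ : γ < σ) : IntegrableOn (fun r : ℝ ↦ r ^ (γ - σ - 1)) (Ioi 1) :=
    integrableOn_Ioi_rpow_of_lt (by linarith) one_pos
  have hval {γ : ℝ} (hγ : γ < σ) : ∫ r in Ioi 1, r ^ (γ - σ - 1) = 1 / (σ - γ) := by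
    rw [integral_Ioi_rpow_of_lt (by linarith) one_pos, Real.one_rpow, sub_add_cancel, ← neg_sub,
      neg_div_neg_eq]
  have hmul {γ r : ℝ} (hr : 1 < r) : r ^ γ * r ^ (-σ - 1) = r ^ (γ - σ - 1) := by
    rw [← Real.rpow_add (by linarith)]
    ring_nf
  set e : ℝ → ℝ := fun r ↦ c r * r ^ (-σ - 1) - A * r ^ (α - σ - 1)
  have he_bound : ∀ r ∈ Ioi (1 : ℝ), ‖e r‖ ≤ K * r ^ (β - σ - 1) := by
    intro r hr
    have he : e r = (c r - A * r ^ α) * r ^ (-σ - 1) := by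
      rw [sub_mul, mul_assoc, hmul hr]
    have hr0 : 0 < r := zero_lt_one.trans hr
    rw [he, Real.norm_eq_abs, abs_mul, abs_of_pos (Real.rpow_pos_of_pos hr0 _), ← hmul hr,
      ← mul_assoc]
    exact mul_le_mul_of_nonneg_right (hc_bound r hr) (Real.rpow_nonneg hr0.le _)
  have he_bound_ae : ∀ᵐ r ∂volume.restrict (Ioi (1 : ℝ)), ‖e r‖ ≤ K * r ^ (β - σ - 1) :=
    (ae_restrict_iff' measurableSet_Ioi).2 (.of_forall he_bound)
  have he_int : IntegrableOn e (Ioi 1) :=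
    ((hint hβ).const_mul K).mono' (by fun_prop) he_bound_ae
  have hsplit : ∫ r in Ioi 1, c r * r ^ (-σ - 1) = (∫ r in Ioi 1, e r) + A / (σ - α) := by
    rw [← mul_one_div A, ← hval hα, ← integral_const_mul,
      ← integral_add he_int ((hint hα).const_mul A)]
    simp only [e, sub_add_cancel]
  calc |(∫ r in Ioi 1, c r * r ^ (-σ - 1)) - A / (σ - α)| = ‖∫ r in Ioi 1, e r‖ := by
        rw [hsplit, add_sub_cancel_right, Real.norm_eq_abs]
    _ ≤ ∫ r in Ioi 1, K * r ^ (β - σ - 1) :=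
        norm_integral_le_of_norm_le ((hint hβ).const_mul K) he_bound_ae
    _ = K / (σ - β) := by rw [integral_const_mul, hval hβ, mul_one_div]

lemma tendsto_mul_sub_one_of_abs_sub_div_le {f : ℝ → ℝ} {L C : ℝ}
    (hf : ∀ s, 1 < s → |f s - L / (s - 1)| ≤ C) :
    Tendsto (fun s ↦ f s * (s - 1)) (𝓝[>] 1) (𝓝 L) := by
  rw [← tendsto_sub_nhds_zero_iff]
  have hlim : Tendsto (fun s : ℝ ↦ C * (s - 1)) (𝓝[>] 1) (𝓝 0) := by
    have : Tendsto (fun s : ℝ ↦ C * (s - 1)) (𝓝 1) (𝓝 (C * (1 - 1))) :=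
      (continuous_const.mul (continuous_id.sub continuous_const)).tendsto 1
    simpa using tendsto_nhdsWithin_of_tendsto_nhds this
  refine squeeze_zero_norm' ?_ hlim
  filter_upwards [self_mem_nhdsWithin] with s (hs : 1 < s)
  have hs' : 0 < s - 1 := sub_pos.2 hs
  rw [Real.norm_eq_abs, show f s * (s - 1) - L = (f s - L / (s - 1)) * (s - 1) by
    field_simp, abs_mul, abs_of_pos hs']
  exact mul_le_mul_of_nonneg_right (hf s hs) hs'.le

lemma Complex.toReal_volume_ball (a : ℂ) {ρ : ℝ} (hρ : 0 ≤ ρ) :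
    (volume (ball a ρ)).toReal = π * ρ ^ 2 := by
  simp [ENNReal.toReal_ofReal hρ, mul_comm]

namespace GaussianInt

instance : Countable ℤ[i] :=
  Function.Injective.countable (f := fun z : ℤ[i] ↦ (z.re, z.im)) fun _ _ h ↦
    Zsqrtd.ext (congrArg Prod.fst h) (congrArg Prod.snd h)

def cell (z : ℤ[i]) : Set ℂ := Ico (z.re : ℝ) (z.re + 1) ×ℂ Ico (z.im : ℝ) (z.im + 1)

lemma mem_cell {z : ℤ[i]} {w : ℂ} : w ∈ cell z ↔ ⌊w.re⌋ = z.re ∧ ⌊w.im⌋ = z.im := by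
  simp [cell, Complex.mem_reProdIm, Int.floor_eq_iff]

lemma measurableSet_cell (z : ℤ[i]) : MeasurableSet (cell z) :=
  (Complex.measurable_re measurableSet_Ico).inter (Complex.measurable_im measurableSet_Ico)

lemma volume_cell (z : ℤ[i]) : volume (cell z) = 1 := by
  rw [cell, show Ico (z.re : ℝ) (z.re + 1) ×ℂ Ico (z.im : ℝ) (z.im + 1) =
    Complex.measurableEquivRealProd ⁻¹' (Ico (z.re : ℝ) (z.re + 1) ×ˢ Ico (z.im : ℝ) (z.im + 1))
    from rfl, Complex.volume_preserving_equiv_real_prod.measure_preimage_equiv,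
    Measure.volume_eq_prod, Measure.prod_prod]
  simp

lemma pairwise_disjoint_cell : Pairwise (Disjoint on cell) := by
  refine fun z z' hne ↦ disjoint_left.2 fun w hw hw' ↦ hne ?_
  rw [mem_cell] at hw hw'
  exact Zsqrtd.ext (hw.1.symm.trans hw'.1) (hw.2.symm.trans hw'.2)

lemma mem_cell_floor (w : ℂ) : w ∈ cell ⟨⌊w.re⌋, ⌊w.im⌋⟩ := mem_cell.2 ⟨rfl, rfl⟩

lemma norm_sub_lt_of_mem_cell {z : ℤ[i]} {w : ℂ} (hw : w ∈ cell z) : ‖w - z‖ < 2 := by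
  simp only [cell, Complex.mem_reProdIm, mem_Ico] at hw
  have hre : |(w - z).re| < 1 := by
    rw [Complex.sub_re, ← intCast_re, abs_lt]; constructor <;> linarith
  have him : |(w - z).im| < 1 := by
    rw [Complex.sub_im, ← intCast_im, abs_lt]; constructor <;> linarith
  linarith [Complex.norm_le_abs_re_add_abs_im (w - z)]

lemma volume_biUnion_cell (s : Set ℤ[i]) : volume (⋃ z ∈ s, cell z) = s.encard := by
  rw [measure_biUnion s.to_countable (pairwise_disjoint_cell.set_pairwise s)
    fun z _ ↦ measurableSet_cell z]
  simp [volume_cell]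

lemma encard_norm_lt_le_volume_ball (r : ℝ) :
    ({z : ℤ[i] | ‖(z : ℂ)‖ < r}.encard : ℝ≥0∞) ≤ volume (ball (0 : ℂ) (r + 2)) := by
  rw [← volume_biUnion_cell]
  refine measure_mono (iUnion₂_subset fun z hz w hw ↦ ?_)
  rw [mem_ball_zero_iff]
  calc ‖w‖ ≤ ‖w - z‖ + ‖(z : ℂ)‖ := norm_le_norm_sub_add w z
    _ < r + 2 := by linarith [norm_sub_lt_of_mem_cell hw, show ‖(z : ℂ)‖ < r from hz]

lemma volume_ball_le_encard_norm_lt (r : ℝ) :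
    volume (ball (0 : ℂ) (r - 2)) ≤ ({z : ℤ[i] | ‖(z : ℂ)‖ < r}.encard : ℝ≥0∞) := by
  rw [← volume_biUnion_cell]
  refine measure_mono fun w hw ↦ mem_iUnion₂.2 ⟨_, ?_, mem_cell_floor w⟩
  rw [mem_ball_zero_iff] at hw
  exact (norm_le_norm_add_norm_sub w _).trans_lt
    (by linarith [norm_sub_lt_of_mem_cell (mem_cell_floor w)])

noncomputable def latticeCount (r : ℝ) : ℕ∞ :=
  {z : {z : ℤ[i] // z ≠ 0} | ‖((z : ℤ[i]) : ℂ)‖ < r}.encard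

lemma latticeCount_add_one {r : ℝ} (hr : 0 < r) :
    latticeCount r + 1 = {z : ℤ[i] | ‖(z : ℂ)‖ < r}.encard := by
  have h0 : (0 : ℤ[i]) ∈ {z : ℤ[i] | ‖(z : ℂ)‖ < r} := by simpa using hr
  rw [latticeCount, ← Subtype.val_injective.encard_image, ← encard_sdiff_singleton_add_one h0]
  congr 2
  ext z
  simp [and_comm]

lemma monotone_latticeCount : Monotone latticeCount :=
  fun _ _ hrr' ↦ encard_le_encard fun _ hz ↦ lt_of_lt_of_le hz hrr'

lemma latticeCount_ne_top (r : ℝ) : latticeCount r ≠ ⊤ := by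
  have hρ : 0 < |r| + 1 := by positivity
  have hT : ({z : ℤ[i] | ‖(z : ℂ)‖ < |r| + 1}.encard : ℝ≥0∞) < ⊤ :=
    (encard_norm_lt_le_volume_ball _).trans_lt measure_ball_lt_top
  rw [← latticeCount_add_one hρ, ENat.toENNReal_lt_top] at hT
  exact ne_top_of_le_ne_top (WithTop.add_ne_top.1 hT.ne).1
    (monotone_latticeCount ((le_abs_self r).trans (le_add_of_nonneg_right zero_le_one)))

lemma abs_toReal_latticeCount_sub_le {r : ℝ} (hr : 1 ≤ r) :
    |(latticeCount r : ℝ≥0∞).toReal - π * r ^ 2| ≤ 8 * π * r := by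
  set T : ℝ≥0∞ := ({z : ℤ[i] | ‖(z : ℂ)‖ < r}.encard : ℝ≥0∞) with hT_def
  have hT_lt_top : T < ⊤ := (encard_norm_lt_le_volume_ball r).trans_lt measure_ball_lt_top
  have hT : (latticeCount r : ℝ≥0∞).toReal + 1 = T.toReal := by
    rw [hT_def, ← latticeCount_add_one (by linarith), ENat.toENNReal_add,
      ENNReal.toReal_add (by simpa using latticeCount_ne_top r) (by simp)]
    simp
  have hupper : T.toReal ≤ π * (r + 2) ^ 2 := by
    rw [← Complex.toReal_volume_ball 0 (by linarith)]
    exact ENNReal.toReal_mono measure_ball_lt_top.ne (encard_norm_lt_le_volume_ball r)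
  have hlower (h2 : 2 ≤ r) : π * (r - 2) ^ 2 ≤ T.toReal := by
    rw [← Complex.toReal_volume_ball 0 (by linarith)]
    exact ENNReal.toReal_mono hT_lt_top.ne (volume_ball_le_encard_norm_lt r)
  have hpi : π ≤ π * r := le_mul_of_one_le_right Real.pi_pos.le hr
  rw [abs_le]
  constructor
  · rcases le_or_gt 2 r with h2 | h2
    · nlinarith [hlower h2, Real.pi_gt_three]
    · nlinarith [ENNReal.toReal_nonneg (a := (latticeCount r : ℝ≥0∞))]
  · nlinarith

lemma one_le_norm_toComplex {z : ℤ[i]} (hz : z ≠ 0) : 1 ≤ ‖(z : ℂ)‖ := by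
  have h : (1 : ℝ) ≤ ‖(z : ℂ)‖ ^ 2 := by
    rw [← Complex.normSq_eq_norm_sq, ← intCast_real_norm]
    exact_mod_cast norm_pos.2 hz
  exact (one_le_sq_iff₀ (_root_.norm_nonneg _)).1 h

lemma natAbs_norm_rpow_neg (z : ℤ[i]) (s : ℝ) :
    (z.norm.natAbs : ℝ) ^ (-s) = ‖(z : ℂ)‖ ^ (-(2 * s)) := by
  rw [natCast_natAbs_norm, intCast_real_norm, Complex.normSq_eq_norm_sq, ← Real.rpow_natCast,
    ← Real.rpow_mul (_root_.norm_nonneg _)]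
  norm_num

end GaussianInt

open GaussianInt

theorem gaussianZeta_eq_mul_integral {s : ℝ} (hs : 0 < s) :
    gaussianZeta s =
      2 * s * ∫ r in Ioi 1, (latticeCount r : ℝ≥0∞).toReal * r ^ (-(2 * s) - 1) := by
  have hmeas :
      Measurable fun r : ℝ ↦ (latticeCount r : ℝ≥0∞) * ENNReal.ofReal (r ^ (-(2 * s) - 1)) :=
    (ENat.toENNReal_mono.comp monotone_latticeCount).measurable.mul (by fun_prop)
  have hfin : ∀ r, (latticeCount r : ℝ≥0∞) * ENNReal.ofReal (r ^ (-(2 * s) - 1)) < ⊤ := fun r ↦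
    ENNReal.mul_lt_top (ENat.toENNReal_lt_top.2 (latticeCount_ne_top r).lt_top)
      ENNReal.ofReal_lt_top
  calc gaussianZeta s = ∑' z : {z : ℤ[i] // z ≠ 0}, ‖((z : ℤ[i]) : ℂ)‖ ^ (-(2 * s)) :=
        tsum_congr fun z ↦ natAbs_norm_rpow_neg z.1 s
    _ = (∑' z : {z : ℤ[i] // z ≠ 0},
          ENNReal.ofReal (‖((z : ℤ[i]) : ℂ)‖ ^ (-(2 * s)))).toReal := by
        rw [ENNReal.tsum_toReal_eq fun _ ↦ ENNReal.ofReal_ne_top]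
        exact tsum_congr fun z ↦ (ENNReal.toReal_ofReal (by positivity)).symm
    _ = (ENNReal.ofReal (2 * s) * ∫⁻ r in Ioi 1,
          (latticeCount r : ℝ≥0∞) * ENNReal.ofReal (r ^ (-(2 * s) - 1))).toReal := by
        rw [tsum_ofReal_rpow_neg_eq_lintegral _ (fun z ↦ one_le_norm_toComplex z.2)
          (by positivity)]
        rfl
    _ = 2 * s * ∫ r in Ioi 1, (latticeCount r : ℝ≥0∞).toReal * r ^ (-(2 * s) - 1) := by
        rw [ENNReal.toReal_mul, ENNReal.toReal_ofReal (by positivity),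
          ← integral_toReal hmeas.aemeasurable (.of_forall hfin)]
        refine congrArg _ (setIntegral_congr_fun measurableSet_Ioi fun r hr ↦ ?_)
        rw [ENNReal.toReal_mul,
          ENNReal.toReal_ofReal (Real.rpow_nonneg (zero_le_one.trans hr.le) _)]

theorem abs_gaussianZeta_sub_pi_div_le {s : ℝ} (hs : 1 < s) :
    |gaussianZeta s - π / (s - 1)| ≤ 17 * π := by
  have hcount : Measurable fun r ↦ (latticeCount r : ℝ≥0∞).toReal :=
    (ENat.toENNReal_mono.comp monotone_latticeCount).measurable.ennreal_toReal
  have hI := abs_setIntegral_Ioi_one_mul_rpow_sub_le hcount (A := π) (K := 8 * π)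
    (α := 2) (β := 1) (σ := 2 * s) (by linarith) (by linarith) fun r hr ↦ by
      simpa [Real.rpow_two] using abs_toReal_latticeCount_sub_le hr.le
  set I := ∫ r in Ioi 1, (latticeCount r : ℝ≥0∞).toReal * r ^ (-(2 * s) - 1)
  have hs1 : s - 1 ≠ 0 := by linarith
  have hrewrite : 2 * s * I - π / (s - 1) = 2 * s * (I - π / (2 * s - 2)) + π := by
    field_simp
    ring
  have herr : 2 * s * |I - π / (2 * s - 2)| ≤ 16 * π :=
    calc 2 * s * |I - π / (2 * s - 2)| ≤ 2 * s * (8 * π / (2 * s - 1)) := by gcongr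
      _ ≤ 16 * π := by
        rw [mul_div_assoc', div_le_iff₀ (by linarith)]
        nlinarith [Real.pi_pos]
  rw [gaussianZeta_eq_mul_integral (by linarith), hrewrite]
  calc |2 * s * (I - π / (2 * s - 2)) + π|
      ≤ 2 * s * |I - π / (2 * s - 2)| + π := by
        grw [abs_add_le, abs_mul, abs_of_pos (by linarith : 0 < 2 * s), abs_of_pos Real.pi_pos]
    _ ≤ 17 * π := by linarith

/-- For real `s > 1` near `1`, `ζ_{ℤ[i]}(s) = π/(s-1) + O(1)`; in particular
`(s-1) ζ_{ℤ[i]}(s) → π` as `s → 1⁺`. -/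
theorem gaussianZeta_pole :
    (∃ C δ : ℝ, 0 < C ∧ 0 < δ ∧ ∀ s : ℝ, 1 < s → s < 1 + δ →
      |gaussianZeta s - Real.pi / (s - 1)| ≤ C) ∧
    Filter.Tendsto (fun s : ℝ => gaussianZeta s * (s - 1))
      (𝓝[>] 1) (𝓝 Real.pi) :=
  ⟨⟨17 * π, 1, by positivity, one_pos, fun _ hs _ ↦ abs_gaussianZeta_sub_pi_div_le hs⟩,
    tendsto_mul_sub_one_of_abs_sub_div_le fun _ ↦ abs_gaussianZeta_sub_pi_div_le⟩
end

section
/- Let X be a finite nonempty set, ν : X → ℝ≥0 with 𝔼_{x∈X}(ν(x)+1) ≤ C, let G : X → ℝ, and let 0 < ε < 1, 0 < σ < 1/2. Then there exists α ∈ [0,1] such that ∑_{n ∈ ℤ} 𝔼_{x ∈ X}( 1_{G(x) ∈ [ε(n-σ+α), ε(n+σ+α)]} (ν(x)+1) ) ≤ 2σC. -/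
/-!
After dividing by `ε`, the condition on `G x` says that `G x / ε - α` lies within `σ` of the
integer `n`. As `σ < 1/2`, at most one `n` qualifies, so the sum over `n` collapses to
`𝔼 (ν + 1) · 1_{nearInt σ}(G / ε - α)`, with `nearInt σ` the closed `σ`-neighbourhood of `ℤ`.
For each `x`, the function `α ↦ 1_{nearInt σ}(G x / ε - α)` is `1`-periodic and has integral
`2σ` over `[0, 1]`, so averaging over `α ∈ [0, 1]` gives `2σ 𝔼 (ν + 1) ≤ 2σC`, and some `α` is
no worse than the average.
-/

open MeasureTheory Set

def nearInt (σ : ℝ) : Set ℝ := ⋃ n : ℤ, Icc (n - σ) (n + σ)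

theorem mem_nearInt_iff {σ u : ℝ} : u ∈ nearInt σ ↔ |u - round u| ≤ σ := by
  simp only [nearInt, mem_iUnion, ← mem_Icc_iff_abs_le, abs_sub_comm _ u]
  exact ⟨fun ⟨n, hn⟩ => (round_le u n).trans hn, fun h => ⟨round u, h⟩⟩

theorem measurableSet_nearInt (σ : ℝ) : MeasurableSet (nearInt σ) :=
  .iUnion fun _ => measurableSet_Icc

theorem periodic_indicator_nearInt (σ : ℝ) :
    Function.Periodic ((nearInt σ).indicator (1 : ℝ → ℝ)) 1 := by
  intro u
  simp only [indicator, mem_nearInt_iff, round_add_one, Int.cast_add, Int.cast_one,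
    add_sub_add_right_eq_sub, Pi.one_apply]

theorem round_eq_of_abs_sub_le {σ u : ℝ} {n : ℤ} (hσ : σ < 1 / 2) (h : |u - n| ≤ σ) :
    round u = n := by
  rw [round_eq_iff]
  constructor <;> linarith [abs_le.1 h]

theorem ite_abs_sub_intCast_le_eq_zero {σ u : ℝ} {n : ℤ} (hσ : σ < 1 / 2) (hn : n ≠ round u)
    (w : ℝ) : (if |u - n| ≤ σ then w else 0) = 0 :=
  if_neg fun h => hn (round_eq_of_abs_sub_le hσ h).symm

theorem nearInt_inter_Ioc {σ : ℝ} (hσ : σ < 1 / 2) :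
    nearInt σ ∩ Ioc (-(1 / 2)) (1 / 2) = Icc (-σ) σ := by
  ext u
  simp only [mem_inter_iff, mem_nearInt_iff, mem_Ioc, mem_Icc, ← abs_le]
  constructor
  · rintro ⟨hu, hlo, hhi⟩
    have hround : |(round u : ℝ)| < 1 := by
      have := abs_sub_abs_le_abs_sub (round u : ℝ) u
      rw [abs_sub_comm] at this
      linarith [abs_le.2 ⟨hlo.le, hhi⟩]
    have h0 : round u = 0 := Int.abs_lt_one_iff.1 (by exact_mod_cast hround)
    rwa [h0, Int.cast_zero, sub_zero] at hu
  · intro hu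
    have h0 : round u = 0 := round_eq_of_abs_sub_le (n := 0) hσ (by simpa using hu)
    refine ⟨by simpa [h0] using hu, ?_⟩
    constructor <;> linarith [abs_le.1 hu]

theorem integral_indicator_nearInt_sub {σ : ℝ} (hσ : 0 ≤ σ) (hσ2 : σ < 1 / 2) (r : ℝ) :
    ∫ α in (0 : ℝ)..1, (nearInt σ).indicator 1 (r - α) = 2 * σ := by
  have hshift := (periodic_indicator_nearInt σ).intervalIntegral_add_eq (r - 1) (-(1 / 2))
  rw [sub_add_cancel, show -(1 / 2) + 1 = (1 / 2 : ℝ) by norm_num] at hshift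
  rw [intervalIntegral.integral_comp_sub_left, sub_zero, hshift,
    intervalIntegral.integral_of_le (by norm_num),
    integral_indicator_one (measurableSet_nearInt σ),
    measureReal_restrict_apply (measurableSet_nearInt σ), nearInt_inter_Ioc hσ2,
    Real.volume_real_Icc, max_eq_left (by linarith)]
  ring

theorem intervalIntegrable_indicator_nearInt_sub (σ r a b : ℝ) :
    IntervalIntegrable (fun α => (nearInt σ).indicator (1 : ℝ → ℝ) (r - α)) volume a b := by
  have h : IntervalIntegrable ((nearInt σ).indicator (1 : ℝ → ℝ)) volume (r - a) (r - b) := by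
    rw [intervalIntegrable_iff]
    exact (integrableOn_const (by simp)).indicator (measurableSet_nearInt σ)
  simpa using h.comp_sub_left r

theorem finsum_sum_ite_abs_sub_intCast_le {X : Type*} [Fintype X] {σ : ℝ} (hσ : σ < 1 / 2)
    (u w : X → ℝ) :
    ∑ᶠ n : ℤ, ∑ x, (if |u x - n| ≤ σ then w x else 0) =
      ∑ x, w x * (nearInt σ).indicator 1 (u x) := by
  rw [finsum_sum_comm]
  · refine Finset.sum_congr rfl fun x _ => ?_
    rw [finsum_eq_single _ (round (u x)) fun n hn => ite_abs_sub_intCast_le_eq_zero hσ hn _]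
    by_cases h : |u x - round (u x)| ≤ σ
    · simp [h, mem_nearInt_iff.2 h]
    · simp [h, mt mem_nearInt_iff.1 h]
  · refine fun x _ => (finite_singleton (round (u x))).subset fun n hn => ?_
    by_contra hne
    exact hn (ite_abs_sub_intCast_le_eq_zero hσ hne _)

theorem exists_le_intervalAverage {f : ℝ → ℝ} {a b : ℝ} (hab : a < b)
    (hf : IntervalIntegrable f volume a b) : ∃ x ∈ Ioc a b, f x ≤ ⨍ x in a..b, f x := by
  rw [intervalIntegrable_iff, uIoc_of_le hab.le] at hf
  rw [uIoc_of_le hab.le]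
  exact exists_le_setAverage (by simp [hab]) (by simp) hf

theorem mem_Icc_mul_iff_abs_le {ε : ℝ} (hε : 0 < ε) (g a σ t : ℝ) :
    g ∈ Icc (ε * (a - σ + t)) (ε * (a + σ + t)) ↔ |g / ε - t - a| ≤ σ := by
  rw [mem_Icc, abs_le, ← le_div_iff₀' hε, ← div_le_iff₀' hε]
  constructor <;> rintro ⟨h₁, h₂⟩ <;> constructor <;> linarith

theorem exists_good_shift_general {X : Type*} [Fintype X]
    (ν : X → ℝ) (C : ℝ)
    (hC : (∑ x : X, (ν x + 1)) / (Fintype.card X : ℝ) ≤ C)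
    (G : X → ℝ) (ε σ : ℝ) (hε : 0 < ε) (hσ : 0 < σ) (hσ2 : σ < 1 / 2) :
    ∃ α : ℝ, α ∈ Set.Icc (0 : ℝ) 1 ∧
      (∑ᶠ n : ℤ,
        (∑ x : X, (if G x ∈ Set.Icc (ε * (n - σ + α)) (ε * (n + σ + α)) then ν x + 1 else 0)) /
          (Fintype.card X : ℝ)) ≤ 2 * σ * C := by
  set w : X → ℝ := fun x => (ν x + 1) / Fintype.card X
  set F : ℝ → ℝ := fun α => ∑ x, w x * (nearInt σ).indicator 1 (G x / ε - α)
  have hFint : ∀ x ∈ (Finset.univ : Finset X), IntervalIntegrable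
      (fun α => w x * (nearInt σ).indicator 1 (G x / ε - α)) volume 0 1 :=
    fun x _ => (intervalIntegrable_indicator_nearInt_sub σ _ 0 1).const_mul (w x)
  have hFi : IntervalIntegrable F volume 0 1 := by
    simpa only [Finset.sum_fn] using IntervalIntegrable.sum _ hFint
  obtain ⟨α, hα, hle⟩ := exists_le_intervalAverage zero_lt_one hFi
  refine ⟨α, Ioc_subset_Icc_self hα, ?_⟩
  calc _ = F α := by
        simp only [mem_Icc_mul_iff_abs_le hε, Finset.sum_div, ite_div, zero_div]
        exact finsum_sum_ite_abs_sub_intCast_le hσ2 (fun x => G x / ε - α) w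
    _ ≤ ⨍ α in (0 : ℝ)..1, F α := hle
    _ = 2 * σ * ((∑ x : X, (ν x + 1)) / Fintype.card X) := by
        simp only [F, interval_average_eq_div, sub_zero, div_one,
          intervalIntegral.integral_finsetSum hFint, intervalIntegral.integral_const_mul,
          integral_indicator_nearInt_sub hσ.le hσ2, w, ← Finset.sum_div, ← Finset.sum_mul]
        ring
    _ ≤ 2 * σ * C := by gcongr

/-- Pigeonhole/Fubini step in the construction of σ-algebras from dual functions:
there is a shift `α ∈ [0,1]` such that the total weighted measure of the
`εσ`-neighbourhoods of the lattice `ε(ℤ + α)` under `G` is at most `2σC`. -/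
theorem exists_good_shift {X : Type*} [Fintype X] [Nonempty X]
    (ν : X → ℝ) (hν : ∀ x, 0 ≤ ν x) (C : ℝ)
    (hC : (∑ x : X, (ν x + 1)) / (Fintype.card X : ℝ) ≤ C)
    (G : X → ℝ) (ε σ : ℝ) (hε : 0 < ε) (hε1 : ε < 1) (hσ : 0 < σ) (hσ2 : σ < 1 / 2) :
    ∃ α : ℝ, α ∈ Set.Icc (0 : ℝ) 1 ∧
      (∑ᶠ n : ℤ,
        (∑ x : X, (if G x ∈ Set.Icc (ε * (n - σ + α)) (ε * (n + σ + α)) then ν x + 1 else 0)) /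
          (Fintype.card X : ℝ)) ≤ 2 * σ * C :=
  exists_good_shift_general ν C hC G ε σ hε hσ hσ2
end
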